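/- Let L be a k × m matrix and R a k × n matrix, each with all columns of Euclidean norm at most 1. Then the Schur multiplier norm of X = L*R is at most 1: for every m × n matrix A with operator norm ‖A‖_op ≤ 1, the entrywise product X ∘ A has operator norm at most 1. -/

import Mathlib

/-!
Let `R_s` be the `s`-th row of `R`. Entry `i` of `((Lᴴ * R) ∘ A) z` is
`∑ s, conj (L s i) * (A (R_s ∘ z)) i`, so Cauchy–Schwarz in `s` and the unit column `i` of `L`
bound its square by `∑ s, |(A (R_s ∘ z)) i|²`. Summing over `i` and using `‖A‖ ≤ 1` gives at most
`∑ s, ‖R_s ∘ z‖² = ∑ j, (∑ s, |R s j|²) |z j|² ≤ ‖z‖²`, since the columns of `R` are unit vectors.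
-/

open Matrix
open scoped ComplexOrder

noncomputable def l2norm {ι : Type*} [Fintype ι] (v : ι → ℂ) : ℝ :=
  Real.sqrt (∑ i, ‖v i‖ ^ 2)

noncomputable def opNorm {ι κ : Type*} [Fintype ι] [Fintype κ] (X : Matrix ι κ ℂ) : ℝ :=
  sSup {r : ℝ | ∃ z : κ → ℂ, l2norm z ≤ 1 ∧ r = l2norm (X.mulVec z)}

variable {ι κ σ : Type*} [Fintype ι] [Fintype κ] [Fintype σ]

lemma l2norm_nonneg (v : ι → ℂ) : 0 ≤ l2norm v :=
  Real.sqrt_nonneg _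

lemma l2norm_eq_norm_toLp (v : ι → ℂ) : l2norm v = ‖WithLp.toLp 2 v‖ :=
  (EuclideanSpace.norm_eq _).symm

lemma l2norm_le_l2norm_iff {u : ι → ℂ} {v : κ → ℂ} :
    l2norm u ≤ l2norm v ↔ ∑ i, ‖u i‖ ^ 2 ≤ ∑ j, ‖v j‖ ^ 2 :=
  Real.sqrt_le_sqrt_iff (by positivity)

lemma opNorm_eq_norm_toEuclideanLin [DecidableEq κ] (A : Matrix ι κ ℂ) :
    opNorm A = ‖LinearMap.toContinuousLinearMap (toEuclideanLin A)‖ := by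
  rw [← ContinuousLinearMap.sSup_unitClosedBall_eq_norm, opNorm]
  congr 1
  ext r
  constructor
  · rintro ⟨z, hz, rfl⟩
    refine ⟨WithLp.toLp 2 z, by simpa [l2norm_eq_norm_toLp] using hz, ?_⟩
    simp [l2norm_eq_norm_toLp]
  · rintro ⟨z, hz, rfl⟩
    exact ⟨z.ofLp, by simpa [l2norm_eq_norm_toLp] using hz, (l2norm_eq_norm_toLp _).symm⟩

lemma l2norm_mulVec_le (A : Matrix ι κ ℂ) (v : κ → ℂ) :
    l2norm (A *ᵥ v) ≤ opNorm A * l2norm v := by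
  classical
  rw [opNorm_eq_norm_toEuclideanLin]
  simpa [l2norm_eq_norm_toLp] using
    (LinearMap.toContinuousLinearMap (toEuclideanLin A)).le_opNorm (WithLp.toLp 2 v)

lemma opNorm_le_of_forall_l2norm_mulVec_le {A : Matrix ι κ ℂ} {c : ℝ} (hc : 0 ≤ c)
    (h : ∀ v, l2norm (A *ᵥ v) ≤ c * l2norm v) : opNorm A ≤ c := by
  classical
  rw [opNorm_eq_norm_toEuclideanLin]
  refine ContinuousLinearMap.opNorm_le_bound _ hc fun v => ?_
  simpa [l2norm_eq_norm_toLp, toLpLin_apply] using h v.ofLp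

lemma norm_dotProduct_star_sq_le (a b : σ → ℂ) :
    ‖b ⬝ᵥ star a‖ ^ 2 ≤ (∑ s, ‖a s‖ ^ 2) * ∑ s, ‖b s‖ ^ 2 := by
  rw [← EuclideanSpace.inner_toLp_toLp, ← EuclideanSpace.norm_sq_eq, ← EuclideanSpace.norm_sq_eq,
    ← mul_pow]
  exact pow_le_pow_left₀ (norm_nonneg _) (norm_inner_le_norm _ _) 2

omit [Fintype ι] in
lemma hadamard_conjTranspose_mul_mulVec_apply (L : Matrix σ ι ℂ) (R : Matrix σ κ ℂ)
    (A : Matrix ι κ ℂ) (z : κ → ℂ) (i : ι) :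
    ((Lᴴ * R) ⊙ A *ᵥ z) i = (fun s => (A *ᵥ fun j => R s j * z j) i) ⬝ᵥ star fun s => L s i := by
  simp only [mulVec, dotProduct, hadamard_apply, mul_apply, conjTranspose_apply, Pi.star_apply,
    Finset.sum_mul]
  rw [Finset.sum_comm]
  refine Finset.sum_congr rfl fun j _ => Finset.sum_congr rfl fun s _ => ?_
  ring

lemma l2norm_hadamard_mulVec_le {L : Matrix σ ι ℂ} {R : Matrix σ κ ℂ} {A : Matrix ι κ ℂ}
    (hL : ∀ i, l2norm (fun s => L s i) ≤ 1) (hR : ∀ j, l2norm (fun s => R s j) ≤ 1)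
    (hA : opNorm A ≤ 1) (z : κ → ℂ) :
    l2norm ((Lᴴ * R) ⊙ A *ᵥ z) ≤ l2norm z := by
  set w : σ → ι → ℂ := fun s => A *ᵥ fun j => R s j * z j
  rw [l2norm_le_l2norm_iff]
  calc ∑ i, ‖((Lᴴ * R) ⊙ A *ᵥ z) i‖ ^ 2
      ≤ ∑ i, ∑ s, ‖w s i‖ ^ 2 := by
        gcongr with i
        rw [hadamard_conjTranspose_mul_mulVec_apply]
        exact (norm_dotProduct_star_sq_le _ _).trans
          (mul_le_of_le_one_left (by positivity) (Real.sqrt_le_one.1 (hL i)))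
    _ = ∑ s, ∑ i, ‖w s i‖ ^ 2 := Finset.sum_comm
    _ ≤ ∑ s, ∑ j, ‖R s j * z j‖ ^ 2 := by
        gcongr with s
        exact l2norm_le_l2norm_iff.1 <| (l2norm_mulVec_le A _).trans
          (mul_le_of_le_one_left (l2norm_nonneg _) hA)
    _ = ∑ j, (∑ s, ‖R s j‖ ^ 2) * ‖z j‖ ^ 2 := by
        simp only [norm_mul, mul_pow, Finset.sum_mul]
        exact Finset.sum_comm
    _ ≤ ∑ j, ‖z j‖ ^ 2 := by
        gcongr with j
        exact mul_le_of_le_one_left (by positivity) (Real.sqrt_le_one.1 (hR j))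

theorem stmt17 {k m n : ℕ} (L : Matrix (Fin k) (Fin m) ℂ) (R : Matrix (Fin k) (Fin n) ℂ)
    (hL : ∀ j, Real.sqrt (∑ s, ‖L s j‖ ^ 2) ≤ 1)
    (hR : ∀ j, Real.sqrt (∑ s, ‖R s j‖ ^ 2) ≤ 1)
    (A : Matrix (Fin m) (Fin n) ℂ) (hA : opNorm A ≤ 1) :
    opNorm (Matrix.of fun i j => (Lᴴ * R) i j * A i j) ≤ 1 :=
  opNorm_le_of_forall_l2norm_mulVec_le zero_le_one fun z =>
    (l2norm_hadamard_mulVec_le hL hR hA z).trans_eq (one_mul _).symm
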